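/- arXiv:2502.03585 — 5 statements merged into one kernel-verified Lean document; each statement's English description precedes it below -/
import Mathlib

section
/- If 𝒢 and ℋ are tame groupoids, then the product groupoid 𝒢 × ℋ (the product category, which is a groupoid) is tame and |𝒢 × ℋ| = |𝒢| · |ℋ|. -/
/-!
Isomorphism classes of objects of `C × D` are pairs of isomorphism classes, and
`Aut (x, y) ≃ Aut x × Aut y`. Hence the family `1 / #Aut` over the skeleton of `C × D` is the
product of the families for `C` and `D`, and a product of two nonnegative summable families is
summable with sum the product of the sums.
-/

open CategoryTheory

/-- The groupoid cardinality: the sum over isomorphism classes of objects of the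
reciprocal of the number of automorphisms. -/
noncomputable def groupoidCard (C : Type*) [Category C] : ℝ :=
  ∑' X : Skeleton C, ((Nat.card (Aut X) : ℝ))⁻¹

/-- A groupoid is tame if the family of reciprocals of automorphism group orders,
indexed by isomorphism classes, is summable. -/
def IsTame (C : Type*) [Category C] : Prop :=
  Summable (fun X : Skeleton C => ((Nat.card (Aut X) : ℝ))⁻¹)

namespace CategoryTheory

variable {C D : Type*} [Category C] [Category D]

def Iso.prodEquiv (X Y : C × D) : (X ≅ Y) ≃ (X.1 ≅ Y.1) × (X.2 ≅ Y.2) where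
  toFun i := ((Prod.fst C D).mapIso i, (Prod.snd C D).mapIso i)
  invFun p := p.1.prod p.2
  left_inv _ := rfl
  right_inv _ := rfl

lemma isIsomorphic_prod_iff (X Y : C × D) :
    IsIsomorphic X Y ↔ IsIsomorphic X.1 Y.1 ∧ IsIsomorphic X.2 Y.2 :=
  (Iso.prodEquiv X Y).nonempty_congr.trans nonempty_prod

noncomputable def skeletonProdEquiv : Skeleton (C × D) ≃ Skeleton C × Skeleton D :=
  (Quotient.congrRight isIsomorphic_prod_iff).trans (Setoid.prodQuotientEquiv _ _).symm

lemma skeletonProdEquiv_toSkeleton (X : C × D) :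
    skeletonProdEquiv (toSkeleton X) = (toSkeleton X.1, toSkeleton X.2) :=
  rfl

lemma natCard_aut_toSkeleton (X : C) : Nat.card (Aut (toSkeleton X)) = Nat.card (Aut X) :=
  Nat.card_congr <| (Functor.FullyFaithful.ofFullyFaithful (fromSkeleton C)).isoEquiv.trans
    (fromSkeletonToSkeletonIso X).conjAut.toEquiv

lemma natCard_aut_prod (X : C × D) :
    Nat.card (Aut X) = Nat.card (Aut X.1) * Nat.card (Aut X.2) :=
  (Nat.card_congr (Iso.prodEquiv X X)).trans (Nat.card_prod _ _)

lemma natCard_aut_skeleton_prod (Z : Skeleton (C × D)) :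
    Nat.card (Aut Z) =
      Nat.card (Aut (skeletonProdEquiv Z).1) * Nat.card (Aut (skeletonProdEquiv Z).2) := by
  induction Z using Quotient.inductionOn with
  | h X =>
    simp only [← toSkeleton.eq_def, skeletonProdEquiv_toSkeleton, natCard_aut_toSkeleton]
    exact natCard_aut_prod X

end CategoryTheory

lemma hasSum_inv_natCard_aut_prod {C D : Type*} [Category C] [Category D]
    (hC : IsTame C) (hD : IsTame D) :
    HasSum (fun Z : Skeleton (C × D) => ((Nat.card (Aut Z) : ℝ))⁻¹)
      (groupoidCard C * groupoidCard D) := by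
  have hprod : HasSum (fun P : Skeleton C × Skeleton D =>
      ((Nat.card (Aut P.1) : ℝ))⁻¹ * ((Nat.card (Aut P.2) : ℝ))⁻¹)
      (groupoidCard C * groupoidCard D) :=
    hC.hasSum.mul hD.hasSum <|
      hC.mul_of_nonneg hD (fun _ => by positivity) (fun _ => by positivity)
  rw [← skeletonProdEquiv.hasSum_iff] at hprod
  simpa only [Function.comp_def, natCard_aut_skeleton_prod, Nat.cast_mul, mul_inv] using hprod

/-- If `𝒢` and `ℋ` are tame groupoids then the product groupoid `𝒢 × ℋ` is tame and
`|𝒢 × ℋ| = |𝒢| ⬝ |ℋ|`. -/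
theorem isTame_prod_and_groupoidCard_prod {G : Type*} {H : Type*} [Groupoid G] [Groupoid H]
    (hG : IsTame G) (hH : IsTame H) :
    IsTame (G × H) ∧ groupoidCard (G × H) = groupoidCard G * groupoidCard H :=
  have h := hasSum_inv_natCard_aut_prod hG hH
  ⟨h.summable, h.tsum_eq⟩
end

section
/- Let ℋ be a finite groupoid and 𝒢 a locally finite groupoid such that the functor groupoid ℋ ⥤ 𝒢 is tame. Then |ℋ ⥤ 𝒢| = ∏_{[y] ∈ iso classes of ℋ} ∑_{[x] ∈ iso classes of 𝒢} #Hom(Aut(y), Aut(x)) / #Aut(x), where Hom(Aut(y), Aut(x)) denotes the set of group homomorphisms from the automorphism group of y in ℋ to that of x in 𝒢, the product is a finite product over the skeleton of ℋ, and the inner sum is a tsum over the skeleton of 𝒢. -/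
open CategoryTheory

/-!
Restricting a functor `H ⥤ G` to the automorphism groups of a skeleton of `H` is an equivalence
`H ⥤ G ≌ ∏_{[y]} (SingleObj (Aut y) ⥤ G)`, and groupoid cardinality is invariant under
equivalence and multiplicative on finite products. A functor `SingleObj Γ ⥤ G` is an object `x`
together with a homomorphism `Γ →* Aut x`, and its automorphisms are the stabilizer of that
homomorphism under conjugation by `Aut x`; so by orbit–stabilizer the functors landing at `x`
contribute `#Hom(Γ, Aut x) / #Aut x`.
-/

open scoped ENNReal

instance {M N : Type*} [Monoid M] [Monoid N] [Finite M] [Finite N] : Finite (M →* N) :=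
  Finite.of_injective _ DFunLike.coe_injective

universe u w in
theorem ENNReal.prod_univ_tsum {ι : Type u} [Fintype ι] {β : ι → Type w}
    (f : ∀ i, β i → ℝ≥0∞) : ∏ i, ∑' b, f i b = ∑' x : ∀ i, β i, ∏ i, f i (x i) := by
  refine Fintype.induction_empty_option (P := fun ι _ => ∀ (β : ι → Type w)
    (f : ∀ i, β i → ℝ≥0∞), ∏ i, ∑' b, f i b = ∑' x : ∀ i, β i, ∏ i, f i (x i)) ?_ ?_ ?_ ι β f
  · intro α ι _ e ih β f
    let := Fintype.ofEquiv ι e.symm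
    rw [← e.prod_comp, ih, ← (Equiv.piCongrLeft β e).tsum_eq]
    congr! 2 with x
    rw [← e.prod_comp]
    simp only [Equiv.piCongrLeft_apply_apply]
  · intro β f
    simp
  · intro α _ ih β f
    rw [← (Equiv.piOptionEquivProd (β := β)).symm.tsum_eq, ENNReal.tsum_prod', Fintype.prod_option,
      ih, ← ENNReal.tsum_mul_right]
    simp [Fintype.prod_option, ENNReal.tsum_mul_left]

theorem ENNReal.toReal_tsum_natCast_div {ι : Type*} (a b : ι → ℕ) (hb : ∀ i, b i ≠ 0) :
    (∑' i, (a i : ℝ≥0∞) / b i).toReal = ∑' i, (a i : ℝ) / b i := by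
  rw [ENNReal.tsum_toReal_eq fun i =>
    ENNReal.div_ne_top (ENNReal.natCast_ne_top _) (Nat.cast_ne_zero.2 (hb i))]
  simp only [ENNReal.toReal_div, ENNReal.toReal_natCast]

theorem MulAction.tsum_inv_card_stabilizer (Γ S : Type*) [Group Γ] [Finite Γ] [MulAction Γ S]
    [Finite S] :
    ∑' ω : orbitRel.Quotient Γ S, (Nat.card (stabilizer Γ ω.out) : ℝ≥0∞)⁻¹ =
      Nat.card S / Nat.card Γ := by
  have hΓ : (Nat.card Γ : ℝ≥0∞) ≠ 0 := by exact_mod_cast Nat.card_pos.ne'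
  have hinv (s : Subgroup Γ) : (Nat.card s : ℝ≥0∞)⁻¹ = Nat.card (Γ ⧸ s) / Nat.card Γ := by
    have hs : (Nat.card s : ℝ≥0∞) ≠ 0 := by exact_mod_cast Nat.card_pos.ne'
    rw [ENNReal.eq_div_iff hΓ (ENNReal.natCast_ne_top _),
      Subgroup.card_eq_card_quotient_mul_card_subgroup s, Nat.cast_mul, mul_assoc,
      ENNReal.mul_inv_cancel hs (ENNReal.natCast_ne_top _), mul_one]
  let := Fintype.ofFinite (orbitRel.Quotient Γ S)
  rw [Nat.card_congr (selfEquivSigmaOrbitsQuotientStabilizer Γ S), Nat.card_sigma, Nat.cast_sum,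
    tsum_fintype, div_eq_mul_inv, Finset.sum_mul]
  simp only [hinv, div_eq_mul_inv]

namespace CategoryTheory

instance {C : Type*} [Category C] (X Y : C) [Finite (X ⟶ Y)] : Finite (X ≅ Y) :=
  Finite.of_injective Iso.hom fun _ _ h => Iso.ext h

instance {C : Type*} [Category C] (X : C) [Finite (X ⟶ X)] : Finite (Aut X) :=
  inferInstanceAs (Finite (X ≅ X))

instance {C : Type*} [Category C] (X : C) [Finite (X ⟶ X)] : Finite (End X) :=
  inferInstanceAs (Finite (X ⟶ X))

instance {C : Type*} [Category C] [Finite C] : Finite (Skeleton C) :=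
  inferInstanceAs (Finite (_root_.Quotient (isIsomorphicSetoid C)))

instance {C : Type*} [Category C] [∀ X Y : C, Finite (X ⟶ Y)] (X Y : Skeleton C) :
    Finite (X ⟶ Y) :=
  Finite.of_injective InducedCategory.Hom.hom fun _ _ => InducedCategory.hom_ext

instance {C : Type*} [Category C] [IsGroupoid C] : IsGroupoid (Skeleton C) :=
  InducedCategory.isGroupoid C _

instance {J C : Type*} [Category J] [Category C] [Finite J] [∀ X Y : C, Finite (X ⟶ Y)]
    (F G : J ⥤ C) : Finite (F ⟶ G) :=
  Finite.of_injective NatTrans.app fun _ _ => NatTrans.ext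

theorem card_aut_toSkeleton {C : Type*} [Category C] (X : C) :
    Nat.card (Aut (toSkeleton X)) = Nat.card (Aut X) :=
  Nat.card_congr
    ((skeletonEquivalence C).fullyFaithfulInverse.autMulEquivOfFullyFaithful X).toEquiv.symm

noncomputable def IsGroupoid.autMulEquivEnd {C : Type*} [Category C] [IsGroupoid C] (X : C) :
    Aut X ≃* End X where
  toFun g := g.hom
  invFun f := asIso (f : X ⟶ X)
  left_inv _ := Iso.ext rfl
  right_inv _ := rfl
  map_mul' _ _ := rfl

section Pi

variable {ι : Type*} {C : ι → Type*} [∀ i, Category (C i)]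

def Pi.autEquiv (X : ∀ i, C i) : Aut X ≃ ∀ i, Aut (X i) where
  toFun a i := Pi.isoApp a i
  invFun a := Pi.isoMk a
  left_inv _ := rfl
  right_inv _ := rfl

theorem Pi.bijective_toSkeleton_comp_fromSkeleton :
    Function.Bijective fun p : ∀ i, Skeleton (C i) =>
      toSkeleton fun i => (fromSkeleton (C i)).obj (p i) := by
  refine ⟨fun p q h => funext fun i => ?_, fun X => ?_⟩
  · obtain ⟨e⟩ := toSkeleton_eq_toSkeleton_iff.1 h
    rw [← toSkeleton_fromSkeleton_obj (p i), ← toSkeleton_fromSkeleton_obj (q i)]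
    exact congr_toSkeleton_of_iso (Pi.isoApp e i)
  · let Y := (fromSkeleton _).obj X
    refine ⟨fun i => toSkeleton (Y i), ?_⟩
    exact (congr_toSkeleton_of_iso (Pi.isoMk fun i => fromSkeletonToSkeletonIso (Y i))).trans
      (toSkeleton_fromSkeleton_obj X)

end Pi

namespace Sigma

variable {I : Type*} (C : I → Type*) [∀ i, Category (C i)] (D : Type*) [Category D]

def restrictFunctor : ((Σ i, C i) ⥤ D) ⥤ ∀ i, C i ⥤ D :=
  Functor.pi' fun i => (Functor.whiskeringLeft _ _ D).obj (incl i)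

instance : (restrictFunctor C D).IsEquivalence where
  faithful.map_injective {_ _} α β h := by
    ext ⟨i, X⟩
    exact NatTrans.congr_app (congr_fun h i) X
  full.map_surjective γ := ⟨natTrans γ, rfl⟩
  essSurj.mem_essImage F := ⟨desc F, ⟨Pi.isoMk (inclDesc F)⟩⟩

noncomputable def functorEquivalence : ((Σ i, C i) ⥤ D) ≌ ∀ i, C i ⥤ D :=
  (restrictFunctor C D).asEquivalence

end Sigma

section Skeletal

variable {C : Type*} [Category C] [IsGroupoid C]

def sigmaAutFunctor (C : Type*) [Category C] : (Σ X : C, SingleObj (Aut X)) ⥤ C :=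
  Sigma.desc fun X => SingleObj.functor (Aut.toEnd X)

theorem isEquivalence_sigmaAutFunctor (hC : Skeletal C) : (sigmaAutFunctor C).IsEquivalence where
  faithful.map_injective := by
    rintro _ _ ⟨a⟩ ⟨b⟩ h
    exact congrArg _ (Iso.ext h)
  full.map_surjective {X Y} f := by
    obtain ⟨X, ⟨⟩⟩ := X
    obtain ⟨Y, ⟨⟩⟩ := Y
    change X ⟶ Y at f
    obtain rfl : X = Y := hC ⟨asIso f⟩
    exact ⟨Sigma.SigmaHom.mk (show Aut X from asIso f), rfl⟩
  essSurj.mem_essImage X := ⟨⟨X, SingleObj.star _⟩, ⟨Iso.refl _⟩⟩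

noncomputable def Skeletal.sigmaAutEquivalence (hC : Skeletal C) :
    (Σ X : C, SingleObj (Aut X)) ≌ C :=
  have := isEquivalence_sigmaAutFunctor hC
  (sigmaAutFunctor C).asEquivalence

end Skeletal

noncomputable def functorEquivalencePiSingleObjAut (H G : Type*) [Category H] [IsGroupoid H]
    [Category G] : (H ⥤ G) ≌ ∀ y : Skeleton H, SingleObj (Aut y) ⥤ Skeleton G :=
  ((skeleton_skeletal H).sigmaAutEquivalence.trans (skeletonEquivalence H)).symm.congrLeft.trans <|
    (skeletonEquivalence G).symm.congrRight.trans (Sigma.functorEquivalence _ _)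

section SingleObj

variable {M : Type*} [Monoid M] {C : Type*} [Category C]

instance (X : C) : MulAction (Aut X) (M →* End X) where
  smul g ρ := g.conj.toMonoidHom.comp ρ
  one_smul ρ := MonoidHom.ext fun m => Iso.refl_conj (ρ m)
  mul_smul g h ρ := MonoidHom.ext fun m => Iso.trans_conj h g (ρ m)

theorem Aut.smul_monoidHom_apply {X : C} (g : Aut X) (ρ : M →* End X) (m : M) :
    (g • ρ) m = g.inv ≫ ρ m ≫ g.hom :=
  rfl

theorem Aut.smul_monoidHom_eq_iff {X : C} (g : Aut X) (ρ σ : M →* End X) :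
    g • ρ = σ ↔ ∀ m, ρ m ≫ g.hom = g.hom ≫ σ m := by
  simp only [MonoidHom.ext_iff, Aut.smul_monoidHom_apply]
  exact forall_congr' fun m => Iso.inv_comp_eq g

def SingleObj.autFunctorEquivStabilizer {X : C} (ρ : M →* End X) :
    Aut (SingleObj.functor ρ) ≃ MulAction.stabilizer (Aut X) ρ where
  toFun η := ⟨η.app (SingleObj.star M),
    (Aut.smul_monoidHom_eq_iff _ ρ ρ).2 fun m => η.hom.naturality m⟩
  invFun g := NatIso.ofComponents (fun _ => g.1) ((Aut.smul_monoidHom_eq_iff g.1 ρ ρ).1 g.2)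
  left_inv _ := by ext; rfl
  right_inv _ := rfl

theorem SingleObj.nonempty_iso_functor_iff {X : C} (ρ σ : M →* End X) :
    Nonempty (SingleObj.functor ρ ≅ SingleObj.functor σ) ↔ σ ∈ MulAction.orbit (Aut X) ρ := by
  constructor
  · rintro ⟨η⟩
    exact ⟨η.app (SingleObj.star M),
      (Aut.smul_monoidHom_eq_iff _ ρ σ).2 fun m => η.hom.naturality m⟩
  · rintro ⟨g, rfl⟩
    exact ⟨NatIso.ofComponents (fun _ => g) ((Aut.smul_monoidHom_eq_iff g ρ _).1 rfl)⟩

def SingleObj.isoFunctorMapEnd (F : SingleObj M ⥤ C) :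
    F ≅ SingleObj.functor ((F.mapEnd (SingleObj.star M)).comp (SingleObj.toEnd M).toMonoidHom) :=
  NatIso.ofComponents (fun _ => Iso.refl _) <| by
    rintro ⟨⟩ ⟨⟩ m
    exact (Category.comp_id _).trans (Category.id_comp _).symm

open MulAction in
theorem SingleObj.bijective_toSkeleton_functor (hC : Skeletal C) :
    Function.Bijective fun p : Σ X : C, orbitRel.Quotient (Aut X) (M →* End X) =>
      toSkeleton (SingleObj.functor p.2.out) := by
  constructor
  · rintro ⟨X, ω⟩ ⟨Y, ω'⟩ h
    obtain ⟨η⟩ := toSkeleton_eq_toSkeleton_iff.1 h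
    obtain rfl : X = Y := hC ⟨η.app (SingleObj.star M)⟩
    have hω : ω'.out ∈ orbit (Aut X) ω.out := (nonempty_iso_functor_iff _ _).1 ⟨η⟩
    obtain rfl : ω' = ω := (Quotient.out_equiv_out (s := orbitRel _ _)).1 hω
    rfl
  · intro Z
    let F := (fromSkeleton _).obj Z
    let ρ := (F.mapEnd (SingleObj.star M)).comp (SingleObj.toEnd M).toMonoidHom
    refine ⟨⟨F.obj (SingleObj.star M), Quotient.mk'' ρ⟩, ?_⟩
    obtain ⟨e⟩ := (nonempty_iso_functor_iff _ _).2 (Quotient.mk_out (s := orbitRel _ _) ρ)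
    exact (congr_toSkeleton_of_iso ((isoFunctorMapEnd F).trans e).symm).trans
      (toSkeleton_fromSkeleton_obj Z)

end SingleObj

end CategoryTheory

/-- Groupoid cardinality in `ℝ≥0∞`, where every sum exists. It recovers `groupoidCard` under
`toReal` only when automorphism groups are finite: an infinite `Aut X` contributes `⊤` here but
`(0 : ℝ)⁻¹ = 0` there. -/
noncomputable def egroupoidCard (C : Type*) [Category C] : ℝ≥0∞ :=
  ∑' X : Skeleton C, (Nat.card (Aut X) : ℝ≥0∞)⁻¹

section egroupoidCard

variable {C D : Type*} [Category C] [Category D]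

theorem groupoidCard_eq_toReal_egroupoidCard [∀ X Y : C, Finite (X ⟶ Y)] :
    groupoidCard C = (egroupoidCard C).toReal := by
  have hcard (X : Skeleton C) : (Nat.card (Aut X) : ℝ≥0∞) ≠ 0 := by
    exact_mod_cast Nat.card_pos.ne'
  rw [groupoidCard, egroupoidCard,
    ENNReal.tsum_toReal_eq fun X => ENNReal.inv_ne_top.2 (hcard X)]
  simp only [ENNReal.toReal_inv, ENNReal.toReal_natCast]

theorem egroupoidCard_eq_tsum_of_bijective {ι : Type*} (φ : ι → C)
    (hφ : Function.Bijective (toSkeleton ∘ φ)) :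
    egroupoidCard C = ∑' i, (Nat.card (Aut (φ i)) : ℝ≥0∞)⁻¹ := by
  rw [egroupoidCard, ← (Equiv.ofBijective _ hφ).tsum_eq]
  simp only [Equiv.ofBijective_apply, Function.comp_apply, card_aut_toSkeleton]

theorem egroupoidCard_congr (e : C ≌ D) : egroupoidCard C = egroupoidCard D := by
  let f := ((skeletonEquivalence C).trans e).trans (skeletonEquivalence D).symm
  rw [egroupoidCard, egroupoidCard, ← e.skeletonEquiv.tsum_eq]
  refine tsum_congr fun X => ?_
  rw [Nat.card_congr (f.fullyFaithfulFunctor.autMulEquivOfFullyFaithful X).toEquiv]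
  rfl

theorem egroupoidCard_pi {ι : Type*} [Fintype ι] (C : ι → Type*) [∀ i, Category (C i)] :
    egroupoidCard (∀ i, C i) = ∏ i, egroupoidCard (C i) := by
  rw [egroupoidCard_eq_tsum_of_bijective _ Pi.bijective_toSkeleton_comp_fromSkeleton]
  simp only [egroupoidCard, ENNReal.prod_univ_tsum]
  refine tsum_congr fun p => ?_
  rw [Nat.card_congr (Pi.autEquiv _), Nat.card_pi, Nat.cast_prod,
    ENNReal.prod_inv_distrib fun _ _ _ _ _ => Or.inr (ENNReal.natCast_ne_top _)]
  refine Finset.prod_congr rfl fun i _ => ?_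
  rw [← card_aut_toSkeleton, toSkeleton_fromSkeleton_obj]

theorem egroupoidCard_singleObj_functor {M : Type*} [Monoid M] [Finite M]
    [∀ X Y : C, Finite (X ⟶ Y)] (hC : Skeletal C) :
    egroupoidCard (SingleObj M ⥤ C) =
      ∑' X : C, (Nat.card (M →* End X) : ℝ≥0∞) / Nat.card (Aut X) := by
  rw [egroupoidCard_eq_tsum_of_bijective _ (SingleObj.bijective_toSkeleton_functor hC),
    ENNReal.tsum_sigma']
  refine tsum_congr fun X => ?_
  simp only [Nat.card_congr (SingleObj.autFunctorEquivStabilizer _)]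
  exact MulAction.tsum_inv_card_stabilizer _ _

end egroupoidCard

theorem egroupoidCard_functor (H G : Type*) [Category H] [IsGroupoid H] [Category G]
    [IsGroupoid G] [Fintype (Skeleton H)] [∀ x y : H, Finite (x ⟶ y)]
    [∀ x y : G, Finite (x ⟶ y)] :
    egroupoidCard (H ⥤ G) = ∏ y : Skeleton H, ∑' x : Skeleton G,
      (Nat.card (Aut y →* Aut x) : ℝ≥0∞) / Nat.card (Aut x) := by
  rw [egroupoidCard_congr (functorEquivalencePiSingleObjAut H G), egroupoidCard_pi]
  refine Finset.prod_congr rfl fun y _ => ?_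
  rw [egroupoidCard_singleObj_functor (skeleton_skeletal G)]
  simp only [Nat.card_congr (IsGroupoid.autMulEquivEnd _).symm.monoidHomCongrRightEquiv]

/-- If `ℋ` is a finite groupoid and `𝒢` is a locally finite groupoid such that the
functor groupoid `ℋ ⥤ 𝒢` is tame, then
`|ℋ ⥤ 𝒢| = ∏_{[y] ∈ sk ℋ} ∑_{[x] ∈ sk 𝒢} #Hom(Aut y, Aut x) / #Aut x`. -/
theorem groupoidCard_functorCategory {H G : Type*} [Groupoid H] [Groupoid G]
    [Finite H] [∀ x y : H, Finite (x ⟶ y)] [∀ x y : G, Finite (x ⟶ y)]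
    (htame : IsTame (H ⥤ G)) :
    groupoidCard (H ⥤ G) =
      ∏ᶠ y : Skeleton H, ∑' x : Skeleton G,
        (Nat.card (Aut y →* Aut x) : ℝ) / (Nat.card (Aut x) : ℝ) := by
  let := Fintype.ofFinite (Skeleton H)
  rw [groupoidCard_eq_toReal_egroupoidCard, egroupoidCard_functor, ENNReal.toReal_prod,
    finprod_eq_prod_of_fintype]
  exact Finset.prod_congr rfl fun y _ =>
    ENNReal.toReal_tsum_natCast_div _ _ fun x => Nat.card_pos.ne'
end

section
/- Let φ : 𝒢 ⥤ ℋ be a functor between tame groupoids. If φ is full, then |𝒢| ≤ |ℋ|. -/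
open CategoryTheory

/-!
A full functor `φ` out of a groupoid reflects isomorphism of objects, since every preimage of an
isomorphism is again invertible; so `φ` induces an injection of skeleta. It also maps each
automorphism group `Aut X` onto `Aut (φ X)`, so every term `1 / #Aut X` of `|𝒢|` is bounded by
the corresponding term of `|ℋ|`, and the sums compare termwise.
-/

/-- An infinite `α` has `Nat.card α = 0`, so the left-hand side is then the junk value `0`. -/
lemma inv_natCard_le_inv_natCard_of_surjective {K : Type*} [Semifield K] [LinearOrder K]
    [IsStrictOrderedRing K] {α β : Type*} {f : α → β} (hf : Function.Surjective f) :
    (Nat.card α : K)⁻¹ ≤ (Nat.card β : K)⁻¹ := by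
  rcases (Nat.card α).eq_zero_or_pos with hα | hα
  · simp [hα]
  · have : Finite α := Nat.finite_of_card_ne_zero hα.ne'
    have : Nonempty β := (Nat.card_pos_iff.mp hα).1.map f
    have : Finite β := Finite.of_surjective f hf
    exact inv_anti₀ (mod_cast Nat.card_pos) (mod_cast Nat.card_le_card_of_surjective f hf)

namespace CategoryTheory

variable {C D : Type*} [Category C] [Category D] [IsGroupoid C]

instance Skeleton.isGroupoid : IsGroupoid (Skeleton C) :=
  InducedCategory.isGroupoid C _

namespace Functor

variable (F : C ⥤ D) [F.Full]

lemma mapAut_surjective (X : C) : Function.Surjective (F.mapAut X) := fun e ↦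
  ⟨asIso (F.preimage e.hom), Iso.ext (F.map_preimage e.hom)⟩

lemma mapSkeleton_injective_of_full : Function.Injective F.mapSkeleton.obj :=
  fun _ _ h ↦ skeleton_skeletal C ⟨asIso (F.mapSkeleton.preimage (eqToHom h))⟩

end Functor

end CategoryTheory

theorem groupoidCard_le_of_full_general {G H : Type*} [Groupoid G] [Groupoid H]
    (hH : IsTame H) (φ : G ⥤ H) [φ.Full] :
    groupoidCard G ≤ groupoidCard H := by
  have hinj := φ.mapSkeleton_injective_of_full
  have hle (X : Skeleton G) :
      (Nat.card (Aut X) : ℝ)⁻¹ ≤ (Nat.card (Aut (φ.mapSkeleton.obj X)) : ℝ)⁻¹ :=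
    inv_natCard_le_inv_natCard_of_surjective (φ.mapSkeleton.mapAut_surjective X)
  have hG : IsTame G := (hH.comp_injective hinj).of_nonneg_of_le (fun _ ↦ by positivity) hle
  exact hG.tsum_le_tsum_of_inj _ hinj (fun _ _ ↦ by positivity) hle hH

/-- A full functor between tame groupoids satisfies `|𝒢| ≤ |ℋ|`. -/
theorem groupoidCard_le_of_full {G H : Type*} [Groupoid G] [Groupoid H]
    (hG : IsTame G) (hH : IsTame H) (φ : G ⥤ H) [φ.Full] :
    groupoidCard G ≤ groupoidCard H :=
  groupoidCard_le_of_full_general hH φ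
end

section
/- Let φ : 𝒢 ⥤ ℋ be a functor between tame groupoids. If φ is essentially surjective and faithful, then |𝒢| ≥ |ℋ|. -/
/-! An essentially surjective functor `φ` induces a surjection `φ.mapSkeleton.obj` on skeleta,
and any section `s` of it is injective. A faithful functor embeds `Aut X` into `Aut (φ X)`, so each
term `1/#Aut Y` of `|ℋ|` is at most the term `1/#Aut (s Y)` of `|𝒢|`: the terms of `|ℋ|` are
dominated by distinct terms of `|𝒢|`. -/

open CategoryTheory

theorem tsum_le_tsum_of_le_comp_of_injective {α β : Type*} {f : β → ℝ} {g : α → ℝ}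
    (hg : Summable g) (hf₀ : ∀ b, 0 ≤ f b) (hg₀ : ∀ a, 0 ≤ g a) {i : β → α}
    (hi : Function.Injective i) (hfg : ∀ b, f b ≤ g (i b)) : ∑' b, f b ≤ ∑' a, g a :=
  calc ∑' b, f b ≤ ∑' b, g (i b) :=
        (Summable.of_nonneg_of_le hf₀ hfg (hg.comp_injective hi)).tsum_le_tsum hfg
          (hg.comp_injective hi)
    _ ≤ ∑' a, g a := tsum_comp_le_tsum_of_inj hg hg₀ hi

theorem inv_natCard_le_inv_natCard_of_injective {α β : Type*} [Nonempty α] {f : α → β}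
    (hf : Function.Injective f) : ((Nat.card β : ℝ))⁻¹ ≤ (Nat.card α : ℝ)⁻¹ := by
  cases finite_or_infinite β with
  | inl hβ =>
    have : Finite α := Finite.of_injective f hf
    exact inv_anti₀ (by exact_mod_cast Nat.card_pos)
      (by exact_mod_cast Nat.card_le_card_of_injective f hf)
  | inr hβ =>
    -- `Nat.card` of an infinite type is `0`, and `0⁻¹ = 0`.
    rw [Nat.card_eq_zero_of_infinite, Nat.cast_zero, inv_zero]
    positivity

namespace CategoryTheory.Functor

variable {C D : Type*} [Category C] [Category D] (F : C ⥤ D)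

theorem mapAut_injective [F.Faithful] (X : C) : Function.Injective (F.mapAut X) :=
  fun _ _ h => Iso.ext (F.map_injective (congrArg Iso.hom h))

theorem inv_natCard_aut_obj_le [F.Faithful] (X : C) :
    ((Nat.card (Aut (F.obj X)) : ℝ))⁻¹ ≤ (Nat.card (Aut X) : ℝ)⁻¹ :=
  inv_natCard_le_inv_natCard_of_injective (F.mapAut_injective X)

end CategoryTheory.Functor

theorem groupoidCard_ge_of_essSurj_faithful_general {G H : Type*} [Groupoid G] [Groupoid H]
    (hG : IsTame G) (φ : G ⥤ H) [φ.EssSurj] [φ.Faithful] :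
    groupoidCard G ≥ groupoidCard H := by
  have hsurj := φ.mapSkeleton_surjective
  refine tsum_le_tsum_of_le_comp_of_injective hG (fun _ => inv_nonneg.2 (Nat.cast_nonneg _))
    (fun _ => inv_nonneg.2 (Nat.cast_nonneg _)) (Function.injective_surjInv hsurj) fun Y => ?_
  conv_lhs => rw [← Function.surjInv_eq hsurj Y]
  exact φ.mapSkeleton.inv_natCard_aut_obj_le _

/-- An essentially surjective and faithful functor between tame groupoids satisfies
`|𝒢| ≥ |ℋ|`. -/
theorem groupoidCard_ge_of_essSurj_faithful {G H : Type*} [Groupoid G] [Groupoid H]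
    (hG : IsTame G) (hH : IsTame H) (φ : G ⥤ H) [φ.EssSurj] [φ.Faithful] :
    groupoidCard G ≥ groupoidCard H :=
  groupoidCard_ge_of_essSurj_faithful_general hG φ
end

section
/- Let L be a relational first-order language (a language with no function symbols), and let A and B be finite L-structures. Suppose that for every finite L-structure C, the number of L-homomorphisms from C to A equals the number of L-homomorphisms from C to B, i.e. Nat.card (C →[L] A) = Nat.card (C →[L] B). Then A and B are isomorphic as L-structures: Nonempty (A ≃[L] B). -/
/-! Every homomorphism `C → A` factors uniquely as the quotient map by its kernel `s` followed by
an injective homomorphism `C/s → A`, where in a relational language `C/s` carries the image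
structure. Hence `hom(C, A) = ∑ₛ inj(C/s, A)`, and since `|C/s| < |C|` for `s ≠ ⊥`, strong
induction on `|C|` turns equal homomorphism counts into equal counts of injective homomorphisms.
Taking `C = A` and `C = B` gives injective homomorphisms `A → B` and `B → A`. Then `|A| = |B|`,
and for each relation symbol the tuples satisfying it in `A` and in `B` are equinumerous, so the
bijection `A → B` also reflects relations. -/

open FirstOrder

universe u

instance Setoid.finite {α : Type*} [Finite α] : Finite (Setoid α) :=
  Finite.of_injective _ fun _ _ => Setoid.eq_iff_rel_eq.mpr

noncomputable instance Setoid.fintypeOfFinite {α : Type*} [Finite α] : Fintype (Setoid α) :=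
  .ofFinite _

theorem Setoid.card_quotient_lt {α : Type*} [Finite α] {s : Setoid α} (hs : s ≠ ⊥) :
    Nat.card (Quotient s) < Nat.card α := by
  refine (Nat.card_le_card_of_surjective _ Quotient.mk_surjective).lt_of_ne fun h => hs ?_
  have hbij := Quotient.mk_surjective.bijective_of_nat_card_le h.ge
  exact le_bot_iff.mp fun a b hab => hbij.injective (Quotient.sound hab)

namespace FirstOrder.Language

open Function Structure

variable {L : Language}

section

variable {A B C : Type*} [L.Structure A] [L.Structure B] [L.Structure C]

instance Hom.finite [Finite A] [Finite B] : Finite (A →[L] B) := FunLike.finite _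

theorem Hom.map_rel_iff_of_injective [Finite A] [Finite B] {f : A →[L] B} {g : B →[L] A}
    (hf : Injective f) (hg : Injective g) {n : ℕ} (r : L.Relations n) (x : Fin n → A) :
    RelMap r (f ∘ x) ↔ RelMap r x := by
  let φ : {x : Fin n → A // RelMap r x} → {y : Fin n → B // RelMap r y} :=
    fun x => ⟨f ∘ x, f.map_rel r x x.2⟩
  let ψ : {y : Fin n → B // RelMap r y} → {x : Fin n → A // RelMap r x} :=
    fun y => ⟨g ∘ y, g.map_rel r y y.2⟩
  have hφ : Injective φ := fun x y h => Subtype.ext (hf.comp_left (congrArg Subtype.val h))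
  have hψ : Injective ψ := fun x y h => Subtype.ext (hg.comp_left (congrArg Subtype.val h))
  have hφ_surj := (hφ.bijective_of_nat_card_le (Nat.card_le_card_of_injective ψ hψ)).surjective
  refine ⟨fun hx => ?_, f.map_rel r x⟩
  obtain ⟨⟨y, hy⟩, hyx⟩ := hφ_surj ⟨f ∘ x, hx⟩
  rwa [← hf.comp_left (congrArg Subtype.val hyx)]

theorem nonempty_equiv_of_injective_hom [Finite A] [Finite B] {f : A →[L] B} {g : B →[L] A}
    (hf : Injective f) (hg : Injective g) : Nonempty (A ≃[L] B) :=
  have hbij := hf.bijective_of_nat_card_le (Nat.card_le_card_of_injective g hg)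
  ⟨⟨Equiv.ofBijective f hbij, f.map_fun, Hom.map_rel_iff_of_injective hf hg⟩⟩

theorem card_hom_eq_sum_card_ker_fiber [Finite C] [Finite A] :
    Nat.card (C →[L] A) = ∑ s : Setoid C, Nat.card {f : C →[L] A // Setoid.ker f = s} := by
  rw [← Nat.card_congr (Equiv.sigmaFiberEquiv fun f : C →[L] A => Setoid.ker f), Nat.card_sigma]

end

abbrev quotientStructureOfIsRelational [L.IsRelational] {C : Type*} [L.Structure C]
    (s : Setoid C) : L.Structure (Quotient s) where
  funMap f := isEmptyElim f
  RelMap r x := ∃ y, Quotient.mk s ∘ y = x ∧ RelMap r y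

attribute [local instance] quotientStructureOfIsRelational

section Quotient

variable [L.IsRelational] {A C : Type*} [L.Structure A] [L.Structure C]

def Hom.quotientMk (s : Setoid C) : C →[L] Quotient s where
  toFun := Quotient.mk s
  map_fun' f := isEmptyElim f
  map_rel' _ x h := ⟨x, rfl, h⟩

def Hom.quotientLift {s : Setoid C} (f : C →[L] A) (hf : s ≤ Setoid.ker f) :
    Quotient s →[L] A where
  toFun := Quotient.lift f hf
  map_fun' g := isEmptyElim g
  map_rel' r _ := fun ⟨y, hy, hry⟩ => hy ▸ f.map_rel r y hry

def kerFiberEquiv (s : Setoid C) :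
    {f : C →[L] A // Setoid.ker f = s} ≃ {g : Quotient s →[L] A // Injective g} where
  toFun f := ⟨Hom.quotientLift f.1 f.2.ge, by
    obtain ⟨f, rfl⟩ := f
    exact Setoid.kerLift_injective f⟩
  invFun g := ⟨g.1.comp (Hom.quotientMk s), by
    ext a b
    exact g.2.eq_iff.trans Quotient.eq⟩
  left_inv _ := Subtype.ext (Hom.ext fun _ => rfl)
  right_inv _ := Subtype.ext (Hom.ext fun q => Quotient.inductionOn q fun _ => rfl)

end Quotient

variable [L.IsRelational] {A B : Type u} [L.Structure A] [L.Structure B] [Finite A] [Finite B]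

theorem card_injective_hom_eq_of_card_hom_eq
    (h : ∀ (C : Type u) [L.Structure C], Finite C → Nat.card (C →[L] A) = Nat.card (C →[L] B))
    (C : Type u) [L.Structure C] [Finite C] :
    Nat.card {f : C →[L] A // Injective f} = Nat.card {f : C →[L] B // Injective f} := by
  classical
  induction hn : Nat.card C using Nat.strong_induction_on generalizing C with
  | _ n ih =>
    have fiber_eq (s : Setoid C) (hs : s ≠ ⊥) :
        Nat.card {f : C →[L] A // Setoid.ker f = s} = Nat.card {f : C →[L] B // Setoid.ker f = s} := by
      rw [Nat.card_congr (kerFiberEquiv s), Nat.card_congr (kerFiberEquiv s)]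
      exact ih _ (hn ▸ Setoid.card_quotient_lt hs) (Quotient s) rfl
    have hsum := h C ‹_›
    rw [card_hom_eq_sum_card_ker_fiber, card_hom_eq_sum_card_ker_fiber,
      ← Finset.add_sum_erase _ _ (Finset.mem_univ ⊥), ← Finset.add_sum_erase _ _ (Finset.mem_univ ⊥),
      Finset.sum_congr rfl fun s hs => fiber_eq s (Finset.ne_of_mem_erase hs)] at hsum
    simpa only [Setoid.ker_eq_bot_iff] using Nat.add_right_cancel hsum

theorem nonempty_injective_hom_of_card_hom_eq
    (h : ∀ (C : Type u) [L.Structure C], Finite C → Nat.card (C →[L] A) = Nat.card (C →[L] B)) :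
    Nonempty {f : A →[L] B // Injective f} := by
  have hA : 0 < Nat.card {f : A →[L] A // Injective f} :=
    Nat.card_pos_iff.mpr ⟨⟨⟨Hom.id L A, injective_id⟩⟩, inferInstance⟩
  rw [card_injective_hom_eq_of_card_hom_eq h A] at hA
  exact (Nat.card_pos_iff.mp hA).1

end FirstOrder.Language

/-- Lovász's homomorphism counting lemma: if `A` and `B` are finite structures in a
relational first-order language `L`, and every finite `L`-structure `C` admits exactly
as many homomorphisms into `A` as into `B`, then `A ≅ B`. -/
theorem lovasz_homomorphism_counting {L : Language} [L.IsRelational]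
    {A B : Type u} [L.Structure A] [L.Structure B] [Finite A] [Finite B]
    (h : ∀ (C : Type u) [L.Structure C], Finite C →
      Nat.card (C →[L] A) = Nat.card (C →[L] B)) :
    Nonempty (A ≃[L] B) := by
  obtain ⟨f, hf⟩ := Language.nonempty_injective_hom_of_card_hom_eq h
  obtain ⟨g, hg⟩ := Language.nonempty_injective_hom_of_card_hom_eq fun C _ hC => (h C hC).symm
  exact Language.nonempty_equiv_of_injective_hom hf hg
end
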